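/- Let N be a bounded normal operator in a Krein space. The set σ₊₊(N) of spectral points of two-sided positive type is open in σ(N): if λ ∈ σ₊₊(N) there is ε > 0 such that every μ ∈ σ(N) with |μ - λ| < ε belongs to σ₊₊(N). -/

import Mathlib

/-!
Positive type at `l` is a uniform property: there are `ε, δ > 0` such that `[x, x] ≥ δ ‖x‖²`
whenever `‖(T - l) x‖ ≤ ε ‖x‖`, and the same `δ` works with `ε / 2` at every point within `ε / 2`
of `l`. Fix such a `μ`. Since `N - μ` is `J`-normal with `J`-adjoint `N⁺ - μ̄`, the vectors
`(N⁺ - μ̄) x` and `(N - μ) x` have the same `J`-square and `(N - μ) (N⁺ - μ̄) x = (N⁺ - μ̄) (N - μ) x`;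
uniform positivity then gives `‖(N⁺ - μ̄) x‖ ≤ K ‖(N - μ) x‖`, and symmetrically with `N` and `N⁺`
exchanged. Hence `N` at `μ` and `N⁺` at `μ̄` have the same approximate eigensequences. A spectral
point `μ` of `N` is an approximate eigenvalue of `N`, or else `N - μ` is bounded below without being
onto, so that `μ̄` is an eigenvalue of `N*` and hence of `N⁺`. Either way both `μ` and `μ̄` are
approximate eigenvalues, and uniform positivity makes them of positive type.
-/

open Filter Topology ContinuousLinearMap

noncomputable section

variable {H : Type*} [NormedAddCommGroup H] [InnerProductSpace ℂ H] [CompleteSpace H]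

def kadj (J T : H →L[ℂ] H) : H →L[ℂ] H := J ∘L (ContinuousLinearMap.adjoint T) ∘L J

def ApproxEig (T : H →L[ℂ] H) (l : ℂ) (x : ℕ → H) : Prop :=
  (∀ n, ‖x n‖ = 1) ∧ Tendsto (fun n => T (x n) - l • x n) atTop (nhds 0)

def approxSpec (T : H →L[ℂ] H) : Set ℂ := {l | ∃ x : ℕ → H, ApproxEig T l x}

def posType (J T : H →L[ℂ] H) : Set ℂ :=
  {l | l ∈ approxSpec T ∧ ∀ x : ℕ → H, ApproxEig T l x →
      0 < Filter.liminf (fun n => (inner ℂ (J (x n)) (x n) : ℂ).re) Filter.atTop}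

section UniformPositivity

omit [CompleteSpace H]

lemma apply_apply_of_comp_self_eq_one {J : H →L[ℂ] H} (hJ2 : J ∘L J = 1) (x : H) :
    J (J x) = x :=
  congr($hJ2 x)

lemma abs_re_inner_apply_self_le (J : H →L[ℂ] H) (x : H) :
    |(inner ℂ (J x) x).re| ≤ ‖J‖ * ‖x‖ ^ 2 := by
  grw [Complex.abs_re_le_norm, norm_inner_le_norm, le_opNorm, mul_assoc, ← sq]

lemma re_inner_smul_apply_smul (J : H →L[ℂ] H) (c : ℂ) (x : H) :
    (inner ℂ (J (c • x)) (c • x)).re = ‖c‖ ^ 2 * (inner ℂ (J x) x).re :=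
  J.reApplyInnerSelf_smul x

def JPositiveOnAlmostKernel (J A : H →L[ℂ] H) (ε δ : ℝ) : Prop :=
  ∀ x, ‖A x‖ ≤ ε * ‖x‖ → δ * ‖x‖ ^ 2 ≤ (inner ℂ (J x) x).re

lemma JPositiveOnAlmostKernel.of_norm_eq_one {J A : H →L[ℂ] H} {ε δ : ℝ}
    (h : ∀ u, ‖u‖ = 1 → ‖A u‖ ≤ ε → δ ≤ (inner ℂ (J u) u).re) :
    JPositiveOnAlmostKernel J A ε δ := by
  intro x hx
  rcases eq_or_ne x 0 with rfl | hx0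
  · simp
  set u := (‖x‖⁻¹ : ℂ) • x
  have hxpos : 0 < ‖x‖ := norm_pos_iff.mpr hx0
  have hAu : ‖A u‖ = ‖x‖⁻¹ * ‖A x‖ := by simp [u, norm_smul]
  have hJu := h u (norm_smul_inv_norm hx0) (by rw [hAu, inv_mul_le_iff₀ hxpos]; linarith)
  rwa [re_inner_smul_apply_smul, norm_inv, Complex.norm_real, norm_norm, inv_pow,
    ← div_eq_inv_mul, le_div_iff₀ (by positivity)] at hJu

lemma exists_jPositiveOnAlmostKernel_of_mem_posType {J T : H →L[ℂ] H} {l : ℂ}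
    (hl : l ∈ posType J T) : ∃ ε > 0, ∃ δ > 0, JPositiveOnAlmostKernel J (T - l • 1) ε δ := by
  by_contra! hcon
  have hbad (n : ℕ) : ∃ u : H, ‖u‖ = 1 ∧ ‖T u - l • u‖ ≤ 1 / (n + 1) ∧
      (inner ℂ (J u) u).re < 1 / (n + 1) := by
    by_contra! h
    exact hcon _ (by positivity) _ (by positivity) (.of_norm_eq_one fun u hu hAu => h u hu hAu)
  choose u hu hTu hJu using hbad
  have hlim : Tendsto (fun n : ℕ => 1 / ((n : ℝ) + 1)) atTop (𝓝 0) :=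
    tendsto_one_div_add_atTop_nhds_zero_nat
  have hpos := hl.2 u ⟨hu, squeeze_zero_norm hTu hlim⟩
  have hbdd : IsBoundedUnder (· ≥ ·) atTop fun n => (inner ℂ (J (u n)) (u n)).re :=
    isBoundedUnder_of ⟨-‖J‖, fun n => by
      simpa [hu n] using neg_le_of_abs_le (abs_re_inner_apply_self_le J (u n))⟩
  have hle := liminf_le_liminf (.of_forall fun n => (hJu n).le) hbdd hlim.isCoboundedUnder_ge
  rw [hlim.liminf_eq] at hle
  linarith

lemma JPositiveOnAlmostKernel.sub_smul_one_of_norm_sub_le {J T : H →L[ℂ] H} {l μ : ℂ}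
    {ε δ : ℝ} (h : JPositiveOnAlmostKernel J (T - l • 1) ε δ) (hμ : ‖μ - l‖ ≤ ε / 2) :
    JPositiveOnAlmostKernel J (T - μ • 1) (ε / 2) δ := by
  intro x hx
  refine h x ?_
  calc ‖(T - l • 1) x‖ = ‖(T - μ • 1) x + (μ - l) • x‖ := by simp [sub_smul]
    _ ≤ ε / 2 * ‖x‖ + ε / 2 * ‖x‖ := by grw [norm_add_le, norm_smul, hx, hμ]
    _ = ε * ‖x‖ := by ring

lemma JPositiveOnAlmostKernel.mem_posType {J T : H →L[ℂ] H} {μ : ℂ} {ε δ : ℝ}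
    (h : JPositiveOnAlmostKernel J (T - μ • 1) ε δ) (hε : 0 < ε) (hδ : 0 < δ)
    (hμ : μ ∈ approxSpec T) : μ ∈ posType J T := by
  refine ⟨hμ, fun x ⟨hx, hTx⟩ => ?_⟩
  have hev : ∀ᶠ n in atTop, δ ≤ (inner ℂ (J (x n)) (x n)).re := by
    filter_upwards [(NormedAddGroup.tendsto_nhds_zero.1 hTx) ε hε] with n hn
    simpa [hx n] using h (x n) (by simpa [hx n] using hn.le)
  have hcobdd : IsCoboundedUnder (· ≥ ·) atTop fun n => (inner ℂ (J (x n)) (x n)).re :=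
    isCoboundedUnder_ge_of_le atTop (x := ‖J‖) fun n => by
      simpa [hx n] using le_of_abs_le (abs_re_inner_apply_self_le J (x n))
  exact hδ.trans_le (le_liminf_of_le hcobdd hev)

lemma ApproxEig.of_norm_le {S T : H →L[ℂ] H} {ν μ : ℂ} {x : ℕ → H} (hx : ApproxEig S ν x)
    {K : ℝ} (hK : ∀ y, ‖(T - μ • 1) y‖ ≤ K * ‖(S - ν • 1) y‖) : ApproxEig T μ x := by
  refine ⟨hx.1, squeeze_zero_norm (fun n => hK (x n)) ?_⟩
  simpa using hx.2.norm.const_mul K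

lemma ApproxEig.const_of_apply_eq_smul {T : H →L[ℂ] H} {μ : ℂ} {v : H} (hv : v ≠ 0)
    (hTv : T v = μ • v) : ApproxEig T μ fun _ => (‖v‖⁻¹ : ℂ) • v :=
  ⟨fun _ => norm_smul_inv_norm hv, by simp [hTv, smul_comm _ μ]⟩

lemma mem_approxSpec_of_not_bounded_below {T : H →L[ℂ] H} {μ : ℂ}
    (h : ∀ c > 0, ∃ v, ‖(T - μ • 1) v‖ < c * ‖v‖) : μ ∈ approxSpec T := by
  have hunit (n : ℕ) : ∃ u : H, ‖u‖ = 1 ∧ ‖(T - μ • 1) u‖ ≤ 1 / (n + 1) := by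
    obtain ⟨v, hv⟩ := h (1 / (n + 1)) (by positivity)
    have hv0 : v ≠ 0 := by rintro rfl; simp at hv
    refine ⟨(‖v‖⁻¹ : ℂ) • v, norm_smul_inv_norm hv0, ?_⟩
    rw [map_smul, norm_smul, norm_inv, Complex.norm_real, norm_norm,
      inv_mul_le_iff₀ (norm_pos_iff.2 hv0), mul_comm]
    exact hv.le
  choose u hu hTu using hunit
  exact ⟨u, hu, squeeze_zero_norm hTu tendsto_one_div_add_atTop_nhds_zero_nat⟩

end UniformPositivity

section KreinAdjoint

variable {J : H →L[ℂ] H}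

lemma kadj_kadj (hJ : adjoint J = J) (hJ2 : J ∘L J = 1) (A : H →L[ℂ] H) :
    kadj J (kadj J A) = A := by
  ext x
  simp [kadj, hJ, apply_apply_of_comp_self_eq_one hJ2]

lemma kadj_sub_smul_one (hJ2 : J ∘L J = 1) (A : H →L[ℂ] H) (μ : ℂ) :
    kadj J (A - μ • 1) = kadj J A - (starRingEnd ℂ) μ • 1 := by
  ext x
  simp [kadj, apply_apply_of_comp_self_eq_one hJ2, map_smulₛₗ adjoint, adjoint_one]

lemma inner_J_kadj_apply (hJ2 : J ∘L J = 1) (A : H →L[ℂ] H) (x y : H) :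
    inner ℂ (J (kadj J A x)) y = inner ℂ (J x) (A y) := by
  simp [kadj, apply_apply_of_comp_self_eq_one hJ2, adjoint_inner_left]

lemma inner_J_apply_kadj (hJ : adjoint J = J) (hJ2 : J ∘L J = 1) (A : H →L[ℂ] H) (x y : H) :
    inner ℂ (J x) (kadj J A y) = inner ℂ (J (A x)) y := by
  simpa [kadj_kadj hJ hJ2] using (inner_J_kadj_apply hJ2 (kadj J A) x y).symm

lemma inner_J_kadj_apply_self (hJ : adjoint J = J) (hJ2 : J ∘L J = 1) {A : H →L[ℂ] H}
    (hA : Commute A (kadj J A)) (x : H) :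
    inner ℂ (J (kadj J A x)) (kadj J A x) = inner ℂ (J (A x)) (A x) :=
  calc inner ℂ (J (kadj J A x)) (kadj J A x) = inner ℂ (J (A (kadj J A x))) x :=
        inner_J_apply_kadj hJ hJ2 A _ x
    _ = inner ℂ (J (kadj J A (A x))) x := by
      rw [show A (kadj J A x) = kadj J A (A x) from congr($(hA.eq) x)]
    _ = inner ℂ (J (A x)) (A x) := inner_J_kadj_apply hJ2 A _ x

lemma commute_sub_smul_one_kadj (hJ2 : J ∘L J = 1) {A : H →L[ℂ] H} (hA : Commute A (kadj J A))
    (μ : ℂ) : Commute (A - μ • 1) (kadj J (A - μ • 1)) := by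
  rw [kadj_sub_smul_one hJ2]
  exact (hA.sub_right ((Commute.one_right A).smul_right _)).sub_left
    (((Commute.one_left _).smul_left μ).sub_right (((Commute.one_left 1).smul_left μ).smul_right _))

lemma mem_approxSpec_kadj_of_adjoint_apply_eq_smul (hJ2 : J ∘L J = 1) {T : H →L[ℂ] H} {c : ℂ}
    {v : H} (hv0 : v ≠ 0) (hv : adjoint T v = c • v) : c ∈ approxSpec (kadj J T) := by
  have hJv : J v ≠ 0 := fun h => hv0 <| by
    simpa [apply_apply_of_comp_self_eq_one hJ2] using congr(J $h)
  exact ⟨_, .const_of_apply_eq_smul hJv (by simp [kadj, apply_apply_of_comp_self_eq_one hJ2, hv])⟩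

lemma JPositiveOnAlmostKernel.exists_norm_kadj_apply_le {A : H →L[ℂ] H} {ε δ : ℝ}
    (h : JPositiveOnAlmostKernel J A ε δ) (hJ : adjoint J = J) (hJ2 : J ∘L J = 1)
    (hA : Commute A (kadj J A)) (hε : 0 < ε) (hδ : 0 < δ) :
    ∃ K, ∀ x, ‖kadj J A x‖ ≤ K * ‖A x‖ := by
  refine ⟨max (‖kadj J A‖ / ε) √(‖J‖ / δ), fun x => ?_⟩
  set y := kadj J A x
  -- Either `y` lies in the `ε`-almost kernel of `A`, where the form controls `‖y‖`,
  -- or `‖A y‖ = ‖kadj J A (A x)‖` does.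
  by_cases hy : ‖A y‖ ≤ ε * ‖y‖
  · have hsq : δ * ‖y‖ ^ 2 ≤ ‖J‖ * ‖A x‖ ^ 2 :=
      calc δ * ‖y‖ ^ 2 ≤ (inner ℂ (J y) y).re := h y hy
        _ = (inner ℂ (J (A x)) (A x)).re := by rw [inner_J_kadj_apply_self hJ hJ2 hA]
        _ ≤ ‖J‖ * ‖A x‖ ^ 2 := (le_abs_self _).trans (abs_re_inner_apply_self_le J _)
    have : ‖y‖ ≤ √(‖J‖ / δ) * ‖A x‖ := by
      rw [← Real.sqrt_sq (norm_nonneg y), ← Real.sqrt_sq (norm_nonneg (A x)), ← Real.sqrt_mul]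
      · gcongr
        rw [div_mul_eq_mul_div, le_div_iff₀ hδ]
        linarith
      · positivity
    exact this.trans (by gcongr; exact le_max_right _ _)
  · have hAy : A y = kadj J A (A x) := congr($(hA.eq) x)
    have : ‖y‖ ≤ ‖kadj J A‖ / ε * ‖A x‖ := by
      rw [div_mul_eq_mul_div, le_div_iff₀ hε, mul_comm]
      calc ε * ‖y‖ ≤ ‖A y‖ := (not_le.1 hy).le
        _ ≤ ‖kadj J A‖ * ‖A x‖ := by rw [hAy]; exact le_opNorm _ _
    exact this.trans (by gcongr; exact le_max_left _ _)

lemma JPositiveOnAlmostKernel.exists_norm_kadj_sub_smul_one_apply_le {T : H →L[ℂ] H} {μ : ℂ}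
    {ε δ : ℝ} (h : JPositiveOnAlmostKernel J (T - μ • 1) ε δ) (hJ : adjoint J = J)
    (hJ2 : J ∘L J = 1) (hT : Commute T (kadj J T)) (hε : 0 < ε) (hδ : 0 < δ) :
    ∃ K, ∀ x, ‖(kadj J T - (starRingEnd ℂ) μ • 1) x‖ ≤ K * ‖(T - μ • 1) x‖ := by
  simpa [kadj_sub_smul_one hJ2] using
    h.exists_norm_kadj_apply_le hJ hJ2 (commute_sub_smul_one_kadj hJ2 hT μ) hε hδ

end KreinAdjoint
lemma exists_adjoint_eigenvector_of_bounded_below {T : H →L[ℂ] H} {μ : ℂ}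
    (hμ : μ ∈ spectrum ℂ T) {c : ℝ} (hc : 0 < c) (hlow : ∀ v, c * ‖v‖ ≤ ‖(T - μ • 1) v‖) :
    ∃ v ≠ 0, adjoint T v = (starRingEnd ℂ) μ • v := by
  set S := T - μ • 1
  have hanti : AntilipschitzWith c⁻¹.toNNReal S := S.antilipschitz_of_bound fun v => by
    rw [Real.coe_toNNReal _ (by positivity), inv_mul_eq_div, le_div_iff₀ hc, mul_comm]
    exact hlow v
  have hrange : S.range ≠ ⊤ := fun htop => hμ <| by
    rw [spectrum.mem_resolventSet_iff, ← IsUnit.neg_iff, neg_sub, Algebra.algebraMap_eq_smul_one]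
    exact isUnit_iff_bijective.2 ⟨hanti.injective, LinearMap.range_eq_top.1 htop⟩
  have : CompleteSpace S.range := (hanti.isClosed_range S.uniformContinuous).completeSpace_coe
  have hker : (adjoint S).ker ≠ ⊥ := by
    rw [← orthogonal_range]
    exact mt Submodule.orthogonal_eq_bot_iff.1 hrange
  obtain ⟨v, hv, hv0⟩ := Submodule.exists_mem_ne_zero_of_ne_bot hker
  refine ⟨v, hv0, sub_eq_zero.1 ?_⟩
  simpa [S, map_smulₛₗ adjoint, adjoint_one] using hv

lemma mem_approxSpec_or_exists_adjoint_eigenvector {T : H →L[ℂ] H} {μ : ℂ}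
    (hμ : μ ∈ spectrum ℂ T) :
    μ ∈ approxSpec T ∨ ∃ v ≠ 0, adjoint T v = (starRingEnd ℂ) μ • v := by
  by_cases h : ∃ c > 0, ∀ v, c * ‖v‖ ≤ ‖(T - μ • 1) v‖
  · obtain ⟨c, hc, hlow⟩ := h
    exact .inr (exists_adjoint_eigenvector_of_bounded_below hμ hc hlow)
  · push Not at h
    exact .inl (mem_approxSpec_of_not_bounded_below h)

theorem twoSidedPosType_isOpen_in_spectrum (J N : H →L[ℂ] H)
    (hJ : ContinuousLinearMap.adjoint J = J) (hJ2 : J ∘L J = 1)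
    (hN : N ∘L kadj J N = kadj J N ∘L N)
    (l : ℂ) (hl : l ∈ posType J N) (hl' : (starRingEnd ℂ) l ∈ posType J (kadj J N)) :
    ∃ ε > 0, ∀ μ ∈ spectrum ℂ N, ‖μ - l‖ < ε →
      μ ∈ posType J N ∧ (starRingEnd ℂ) μ ∈ posType J (kadj J N) := by
  obtain ⟨ε₁, hε₁, δ₁, hδ₁, h₁⟩ := exists_jPositiveOnAlmostKernel_of_mem_posType hl
  obtain ⟨ε₂, hε₂, δ₂, hδ₂, h₂⟩ := exists_jPositiveOnAlmostKernel_of_mem_posType hl'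
  refine ⟨min ε₁ ε₂ / 2, by positivity, fun μ hμ hμl => ?_⟩
  have hN₁ := h₁.sub_smul_one_of_norm_sub_le (μ := μ) (by linarith [min_le_left ε₁ ε₂])
  have hN₂ := h₂.sub_smul_one_of_norm_sub_le (μ := (starRingEnd ℂ) μ) (by
    rw [← map_sub, RCLike.norm_conj]; linarith [min_le_right ε₁ ε₂])
  have hcomm : Commute N (kadj J N) := hN
  have hcomm' : Commute (kadj J N) (kadj J (kadj J N)) := by
    rw [kadj_kadj hJ hJ2]; exact hcomm.symm
  obtain ⟨K₁, hK₁⟩ := hN₁.exists_norm_kadj_sub_smul_one_apply_le hJ hJ2 hcomm (by positivity) hδ₁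
  obtain ⟨K₂, hK₂⟩ := hN₂.exists_norm_kadj_sub_smul_one_apply_le hJ hJ2 hcomm' (by positivity) hδ₂
  rw [kadj_kadj hJ hJ2, Complex.conj_conj] at hK₂
  obtain ⟨x, hx⟩ : μ ∈ approxSpec N := by
    obtain hμ | ⟨v, hv0, hv⟩ := mem_approxSpec_or_exists_adjoint_eigenvector hμ
    · exact hμ
    · obtain ⟨x, hx⟩ := mem_approxSpec_kadj_of_adjoint_apply_eq_smul hJ2 hv0 hv
      exact ⟨x, hx.of_norm_le hK₂⟩
  exact ⟨hN₁.mem_posType (by positivity) hδ₁ ⟨x, hx⟩,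
    hN₂.mem_posType (by positivity) hδ₂ ⟨x, hx.of_norm_le hK₁⟩⟩
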